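/- arXiv:1302.2235 — 3 statements merged into one kernel-verified Lean document; each statement's English description precedes it below -/
import Mathlib

section
/- The set 𝔰₀ = {x ∈ ℓ∞ : for every ε > 0, the series ∑_{n : |x(n)| ≥ ε} 1/n converges} is a closed (two-sided) ideal in the Banach algebra ℓ∞ of bounded real sequences with the supremum norm. -/
/-- `𝔰₀`: the set of bounded real sequences `x` such that for every `ε > 0` the series
`∑_{n : |x n| ≥ ε} 1/n` converges. -/
def s0 : Set (lp (fun _ : ℕ => ℝ) ⊤) :=
  {x | ∀ ε : ℝ, 0 < ε → Summable (Set.indicator {n : ℕ | ε ≤ |x n|} fun n => 1 / (n : ℝ))}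

/-!
Membership of `x` in `𝔰₀` only depends on the superlevel sets `{n | ε ≤ |x n|}`, and sets
`S ⊆ ℕ` with `∑_{n ∈ S} 1/n < ∞` are closed under subsets and finite unions. Each ideal
property is then an inclusion of superlevel sets: `|c x n| ≤ |c| |x n|` and
`|(x y) n| ≤ ‖y‖ |x n|` shrink the level, `{|x + y| ≥ ε} ⊆ {|x| ≥ ε/2} ∪ {|y| ≥ ε/2}`, and if
`‖x - y‖ < ε/2` then `{|x| ≥ ε} ⊆ {|y| ≥ ε/2}`.
-/

local notation "ℓ∞" => lp (fun _ : ℕ => ℝ) ⊤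

section IndicatorSummable

variable {α E : Type*} [NormedAddCommGroup E] [CompleteSpace E] {f : α → E} {S T : Set α}

theorem Summable.indicator_of_subset (hT : Summable (T.indicator f)) (hST : S ⊆ T) :
    Summable (S.indicator f) := by
  simpa [Set.indicator_indicator, Set.inter_eq_left.mpr hST] using hT.indicator S

theorem Summable.indicator_union (hS : Summable (S.indicator f))
    (hT : Summable (T.indicator f)) : Summable ((S ∪ T).indicator f) := by
  have hsum : Summable ((S ∪ T).indicator f + (S ∩ T).indicator f) := by
    rw [Set.indicator_union_add_inter]
    exact hS.add hT
  have hinter : Summable ((S ∩ T).indicator f) := hS.indicator_of_subset Set.inter_subset_left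
  simpa using hsum.sub hinter

end IndicatorSummable

theorem zero_mem_s0 : (0 : ℓ∞) ∈ s0 := by
  intro ε hε
  have hempty : {n : ℕ | ε ≤ |(0 : ℓ∞) n|} = ∅ := by
    ext n
    simp [hε.not_ge]
  simp only [hempty, Set.indicator_empty]
  exact summable_zero

theorem mem_s0_of_abs_le_mul {x y : ℓ∞} (C : ℝ) (hy : y ∈ s0)
    (hxy : ∀ n, |x n| ≤ C * |y n|) : x ∈ s0 := by
  intro ε hε
  have hC : 0 < |C| + 1 := by positivity
  refine (hy (ε / (|C| + 1)) (div_pos hε hC)).indicator_of_subset fun n hn => ?_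
  simp only [Set.mem_ofPred_eq] at hn ⊢
  rw [div_le_iff₀ hC]
  calc ε ≤ |x n| := hn
    _ ≤ C * |y n| := hxy n
    _ ≤ |y n| * (|C| + 1) := by nlinarith [le_abs_self C, abs_nonneg (y n)]

theorem smul_mem_s0 (c : ℝ) {x : ℓ∞} (hx : x ∈ s0) : c • x ∈ s0 :=
  mem_s0_of_abs_le_mul |c| hx fun n => by simp [abs_mul]

theorem mul_mem_s0 {x : ℓ∞} (hx : x ∈ s0) (y : ℓ∞) : x * y ∈ s0 :=
  mem_s0_of_abs_le_mul ‖y‖ hx fun n => by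
    rw [lp.infty_coeFn_mul, Pi.mul_apply, abs_mul, mul_comm]
    exact mul_le_mul_of_nonneg_right (lp.norm_apply_le_norm ENNReal.top_ne_zero y n)
      (abs_nonneg _)

theorem add_mem_s0 {x y : ℓ∞} (hx : x ∈ s0) (hy : y ∈ s0) : x + y ∈ s0 := by
  intro ε hε
  refine ((hx (ε / 2) (by positivity)).indicator_union (hy (ε / 2) (by positivity))
    ).indicator_of_subset fun n hn => ?_
  simp only [Set.mem_ofPred_eq, Set.mem_union, lp.coeFn_add, Pi.add_apply] at hn ⊢
  by_contra! hsmall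
  linarith [abs_add_le (x n) (y n)]

theorem isClosed_s0 : IsClosed s0 := by
  refine isClosed_of_closure_subset fun x hx ε hε => ?_
  obtain ⟨y, hy, hxy⟩ := Metric.mem_closure_iff.mp hx (ε / 2) (by positivity)
  refine (hy (ε / 2) (by positivity)).indicator_of_subset fun n hn => ?_
  simp only [Set.mem_ofPred_eq] at hn ⊢
  have hdist : |x n - y n| ≤ dist x y := by
    simpa [dist_eq_norm] using lp.norm_apply_le_norm ENNReal.top_ne_zero (x - y) n
  linarith [abs_sub_abs_le_abs_sub (x n) (y n)]

/-- `𝔰₀` is a closed (two-sided) ideal in the Banach algebra `ℓ∞` of bounded real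
sequences with the supremum norm. -/
theorem s0_closed_ideal :
    IsClosed s0 ∧
    (0 : lp (fun _ : ℕ => ℝ) ⊤) ∈ s0 ∧
    (∀ x y, x ∈ s0 → y ∈ s0 → x + y ∈ s0) ∧
    (∀ (c : ℝ) x, x ∈ s0 → c • x ∈ s0) ∧
    (∀ x y : lp (fun _ : ℕ => ℝ) ⊤, x ∈ s0 → x * y ∈ s0 ∧ y * x ∈ s0) :=
  ⟨isClosed_s0, zero_mem_s0, fun _ _ => add_mem_s0, fun c _ => smul_mem_s0 c,
    fun x y hx => ⟨mul_mem_s0 hx y, mul_comm x y ▸ mul_mem_s0 hx y⟩⟩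
end

section
/- 𝔰₀₀ is dense in 𝔰₀ in the supremum norm: every bounded real sequence x such that ∑_{|x(n)| ≥ ε} 1/n converges for all ε > 0 is a uniform limit of bounded sequences whose support is a small set. -/
/-!
Replacing by `0` every entry of `x ∈ 𝔰₀` with `|x n| < ε / 2` moves `x` by at most `ε / 2` in the
supremum norm, and leaves a sequence supported on `{n | ε / 2 ≤ |x n|}`, which is a small set
because `x ∈ 𝔰₀`.
-/

open scoped ENNReal

/-- `𝔰₀₀`: bounded real sequences whose support is a small set. -/
def s00 : Set (lp (fun _ : ℕ => ℝ) ⊤) :=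
  {x | Summable (Set.indicator {n : ℕ | x n ≠ 0} fun n => 1 / (n : ℝ))}

theorem Summable.indicator_of_subset_s7 {α β : Type*} [UniformSpace β] [AddCommGroup β]
    [IsUniformAddGroup β] [CompleteSpace β] {f : α → β} {s t : Set α} (hst : s ⊆ t)
    (h : Summable (t.indicator f)) : Summable (s.indicator f) := by
  simpa [Set.indicator_indicator, Set.inter_eq_left.2 hst] using h.indicator s

namespace lp

variable {α : Type*} {E : α → Type*} [∀ i, NormedAddCommGroup (E i)] {p : ℝ≥0∞}

noncomputable def hardThreshold (x : lp E p) (δ : ℝ) : lp E p :=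
  ⟨fun i => if δ ≤ ‖x i‖ then x i else 0,
    (lp.memℓp x).mono' fun i => by split_ifs <;> simp⟩

theorem hardThreshold_apply (x : lp E p) (δ : ℝ) (i : α) :
    hardThreshold x δ i = if δ ≤ ‖x i‖ then x i else 0 :=
  rfl

theorem support_hardThreshold_subset (x : lp E p) (δ : ℝ) :
    {i | hardThreshold x δ i ≠ 0} ⊆ {i | δ ≤ ‖x i‖} := by
  intro i (hi : _ ≠ 0)
  by_contra (hlt : ¬δ ≤ ‖x i‖)
  exact hi (by simp [hardThreshold_apply, hlt])

theorem norm_sub_hardThreshold_le (x : lp E ∞) {δ : ℝ} (hδ : 0 ≤ δ) :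
    ‖x - hardThreshold x δ‖ ≤ δ := by
  refine lp.norm_le_of_forall_le hδ fun i => ?_
  rw [lp.coeFn_sub, Pi.sub_apply, hardThreshold_apply]
  split_ifs with h
  · simpa using hδ
  · simpa using (not_le.mp h).le

end lp

/-- `𝔰₀₀` is dense in `𝔰₀` in the supremum norm: every element of `𝔰₀` is a uniform
limit of bounded sequences whose support is a small set. -/
theorem s00_dense_in_s0 :
    ∀ x ∈ s0, ∀ ε : ℝ, 0 < ε → ∃ y ∈ s00, ‖x - y‖ < ε := by
  intro x hx ε hε
  refine ⟨lp.hardThreshold x (ε / 2), ?_, ?_⟩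
  · exact (hx (ε / 2) (half_pos hε)).indicator_of_subset_s7 (lp.support_hardThreshold_subset x _)
  · calc ‖x - lp.hardThreshold x (ε / 2)‖ ≤ ε / 2 := lp.norm_sub_hardThreshold_le x (half_pos hε).le
      _ < ε := half_lt_self hε
end

section
/- Let X be a topological space and ℐ a σ-ideal of subsets of X (closed under subsets and countable unions). Then C₀^ℐ(X) = {f ∈ C_b(X) : coz(f) has a neighborhood belonging to ℐ}, where coz(f) = {x : f(x) ≠ 0}. -/
/-! The cozero set of `f` is the countable union of the sets `{x : |f x| ≥ 1/(n+1)}`, and a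
countable union of sets having neighborhoods in `ℐ` has one in `ℐ`: the union of the given
neighborhoods. -/

open Set

variable {X : Type*} [TopologicalSpace X]

/-- `C₀^ℐ(X)`: bounded continuous functions `f` such that for every positive integer `n`
the set `{x : |f x| ≥ 1/n}` has a neighborhood belonging to `I`. -/
def C0 (I : Set (Set X)) : Set (BoundedContinuousFunction X ℝ) :=
  {f | ∀ n : ℕ, 0 < n → ∃ U ∈ I, {x | 1 / (n : ℝ) ≤ |f x|} ⊆ interior U}

def HasNhdIn (I : Set (Set X)) (A : Set X) : Prop :=
  ∃ U ∈ I, A ⊆ interior U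

theorem HasNhdIn.mono {I : Set (Set X)} {A B : Set X} (hA : HasNhdIn I A) (hBA : B ⊆ A) :
    HasNhdIn I B :=
  let ⟨U, hUI, hAU⟩ := hA
  ⟨U, hUI, hBA.trans hAU⟩

theorem hasNhdIn_iUnion {I : Set (Set X)}
    (hcount : ∀ s : ℕ → Set X, (∀ n, s n ∈ I) → (⋃ n, s n) ∈ I)
    {A : ℕ → Set X} (hA : ∀ n, HasNhdIn I (A n)) : HasNhdIn I (⋃ n, A n) := by
  choose U hUI hAU using hA
  refine ⟨⋃ n, U n, hcount U hUI, iUnion_subset fun n => ?_⟩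
  exact (hAU n).trans (interior_mono (subset_iUnion U n))

theorem abs_superlevelSet_subset_support {α : Type*} (f : α → ℝ) {ε : ℝ} (hε : 0 < ε) :
    {x | ε ≤ |f x|} ⊆ Function.support f := fun x hx hfx => by
  rw [mem_ofPred_eq, hfx, abs_zero] at hx
  exact hx.not_gt hε

theorem support_eq_iUnion_one_div_le_abs {α : Type*} (f : α → ℝ) :
    Function.support f = ⋃ n : ℕ, {x | 1 / ((n + 1 : ℕ) : ℝ) ≤ |f x|} := by
  refine Subset.antisymm (fun x hfx => ?_)
    (iUnion_subset fun n => abs_superlevelSet_subset_support f (by positivity))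
  obtain ⟨n, hn⟩ := exists_nat_one_div_lt (abs_pos.mpr hfx)
  exact mem_iUnion.mpr ⟨n, by exact_mod_cast hn.le⟩

theorem C0_eq_coz_nbhd_general (I : Set (Set X))
    (hcount : ∀ s : ℕ → Set X, (∀ n, s n ∈ I) → (⋃ n, s n) ∈ I) :
    C0 I = {f : BoundedContinuousFunction X ℝ |
      ∃ U ∈ I, Function.support ⇑f ⊆ interior U} := by
  ext f
  constructor
  · intro hf
    change HasNhdIn I _
    rw [support_eq_iUnion_one_div_le_abs]
    exact hasNhdIn_iUnion hcount fun n => hf (n + 1) n.succ_pos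
  · intro hf n hn
    exact HasNhdIn.mono hf (abs_superlevelSet_subset_support f (by positivity))

/-- If `ℐ` is a σ-ideal of subsets of `X` (closed under subsets and countable unions),
then `C₀^ℐ(X)` consists exactly of those bounded continuous functions whose cozero-set
has a neighborhood belonging to `ℐ`. -/
theorem C0_eq_coz_nbhd (I : Set (Set X)) (hne : I.Nonempty)
    (hdown : ∀ A B : Set X, A ∈ I → B ⊆ A → B ∈ I)
    (hcount : ∀ s : ℕ → Set X, (∀ n, s n ∈ I) → (⋃ n, s n) ∈ I) :
    C0 I = {f : BoundedContinuousFunction X ℝ |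
      ∃ U ∈ I, Function.support ⇑f ⊆ interior U} :=
  C0_eq_coz_nbhd_general I hcount
end
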